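/- arXiv:2107.02554 — 4 statements merged into one kernel-verified Lean document; each statement's English description precedes it below -/
import Mathlib

section
/- Let G be a bipartite graph with red vertex set R = {r₁,…,r_{n_R}} and blue vertex set B = {b₁,…,b_{n_B}}, and let d ≤ n_R. Define numbers N₁,…,N_{n_R} in base (n_R + 1) with n_B + 1 digits, where the most significant digit of each Nᵢ is 1 and digit j (for j ∈ [n_B]) of Nᵢ is 1 if {rᵢ, b_j} ∈ E(G) and 0 otherwise. Let t be the number whose most significant digit is d and whose remaining n_B digits are all 1. Then G has a set D ⊆ R of size exactly d such that every vertex of B has exactly one neighbor in D, if and only if some subset S of {N₁,…,N_{n_R}} sums to exactly t. -/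
open Finset

/-!
Summing the numbers `Nᵢ` over `S` yields `|S|` in the top digit and, in digit `j`, the number
of members of `S` adjacent to `b_j`. These counts are at most `n_R`, so no carries occur, and
base-`(n_R + 1)` expansions are unique: the sum is `t` exactly when `|S| = d` and every count
is `1`, i.e. when `S` is an exact red-blue dominating set of size `d`.
-/

theorem mul_pow_succ_add_sum_fin_succ (p n c : ℕ) (a : Fin (n + 1) → ℕ) :
    c * p ^ (n + 1) + ∑ j, a j * p ^ (j : ℕ)
      = a 0 + p * (c * p ^ n + ∑ j : Fin n, a j.succ * p ^ (j : ℕ)) := by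
  simp only [Fin.sum_univ_succ, Fin.val_zero, Fin.val_succ, pow_zero, mul_one, pow_succ',
    mul_add, mul_sum, mul_left_comm _ p]
  ring

theorem eq_of_mul_pow_add_sum_digits_eq {p n c c' : ℕ} {a a' : Fin n → ℕ}
    (ha : ∀ j, a j < p) (ha' : ∀ j, a' j < p)
    (h : c * p ^ n + ∑ j, a j * p ^ (j : ℕ) = c' * p ^ n + ∑ j, a' j * p ^ (j : ℕ)) :
    c = c' ∧ a = a' := by
  induction n with
  | zero => exact ⟨by simpa using h, Subsingleton.elim _ _⟩
  | succ n ih =>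
    rw [mul_pow_succ_add_sum_fin_succ, mul_pow_succ_add_sum_fin_succ] at h
    have hp : 0 < p := (ha 0).pos
    obtain ⟨hhigh, hlow⟩ := (Nat.div_mod_unique hp).2 ⟨h, ha 0⟩
    obtain ⟨hhigh', hlow'⟩ := (Nat.div_mod_unique hp).2 ⟨rfl, ha' 0⟩
    obtain ⟨hc, htail⟩ :=
      ih (fun j => ha j.succ) (fun j => ha' j.succ) (hhigh.symm.trans hhigh')
    refine ⟨hc, ?_⟩
    rw [← Fin.cons_self_tail a, ← Fin.cons_self_tail a', ← hlow, hlow']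
    exact congrArg _ htail

theorem sum_const_add_sum_ite {ι κ : Type*} [Fintype κ] (m : ℕ) (w : κ → ℕ)
    (E : ι → κ → Bool) (S : Finset ι) :
    ∑ i ∈ S, (m + ∑ j, if E i j then w j else 0)
      = #S * m + ∑ j, #(S.filter fun i => E i j = true) * w j := by
  rw [sum_add_distrib, sum_const, smul_eq_mul, sum_comm]
  simp only [← sum_filter, sum_const, smul_eq_mul]

/-- The linear-parameter transformation from Exact Red-Blue Dominating Set to
Subset Sum. `E r b` means red vertex `r` is adjacent to blue vertex `b`.
The number `Nᵢ` is `(n_R+1)^{n_B}` (most significant digit 1) plus the incidence digits;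
the target `t` has most significant digit `d` and all other digits 1. `G` has an exact
red-blue dominating set of size exactly `d` iff some subset of the numbers sums to `t`. -/
theorem stmt_2 (nR nB d : ℕ) (hd : 0 < d) (hdn : d ≤ nR)
    (E : Fin nR → Fin nB → Bool) :
    (∃ D : Finset (Fin nR), D.card = d ∧
        ∀ b : Fin nB, (D.filter fun r => E r b = true).card = 1) ↔
    (∃ S : Finset (Fin nR),
        ∑ i ∈ S, ((nR + 1) ^ nB + ∑ j : Fin nB, if E i j then (nR + 1) ^ (j : ℕ) else 0)
          = d * (nR + 1) ^ nB + ∑ j : Fin nB, (nR + 1) ^ (j : ℕ)) := by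
  simp_rw [sum_const_add_sum_ite]
  constructor
  · rintro ⟨D, hcard, hexact⟩
    exact ⟨D, by simp [hcard, hexact]⟩
  · rintro ⟨S, hS⟩
    have hcount (j : Fin nB) : #(S.filter fun i => E i j = true) < nR + 1 :=
      Nat.lt_succ_of_le <| ((card_filter_le _ _).trans (card_le_univ S)).trans_eq
        (Fintype.card_fin nR)
    obtain ⟨hcard, hdigits⟩ := eq_of_mul_pow_add_sum_digits_eq hcount (a' := fun _ => 1)
      (fun _ => by omega) (by simpa using hS)
    exact ⟨S, hcard, congrFun hdigits⟩
end

section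
/- Let G be a bipartite graph with vertex weights w : V(G) → ℕ₊ and let z : E(G) → ℕ be a maximum w-matching (i.e., z maximizes Σ_{e∈E} z(e) subject to Σ_{e ∋ v} z(e) ≤ w(v) for every vertex v). If z({u,v}) > 0 for some edge {u,v}, then every minimum-weight vertex cover of (G, w) contains exactly one of u and v. -/
open Finset

variable {V : Type*}

/-- A set of vertices covering every edge. -/
def IsVertexCover (G : SimpleGraph V) (C : Finset V) : Prop :=
  ∀ ⦃u v : V⦄, G.Adj u v → u ∈ C ∨ v ∈ C

/-- A minimum-weight vertex cover for vertex weights `w`. -/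
def IsMinVertexCover [Fintype V] (G : SimpleGraph V) (w : V → ℕ) (C : Finset V) : Prop :=
  IsVertexCover G C ∧
    ∀ C' : Finset V, IsVertexCover G C' → ∑ x ∈ C, w x ≤ ∑ x ∈ C', w x

/-- A `w`-matching: an assignment of naturals to edges whose total at each vertex is at
most the vertex weight. -/
def IsWMatching [Fintype V] [DecidableEq V] (G : SimpleGraph V) [DecidableRel G.Adj]
    (w : V → ℕ) (z : Sym2 V → ℕ) : Prop :=
  ∀ v : V, ∑ e ∈ G.edgeFinset.filter (fun e => v ∈ e), z e ≤ w v

/-- A maximum `w`-matching: a `w`-matching of maximum total value. -/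
def IsMaxWMatching [Fintype V] [DecidableEq V] (G : SimpleGraph V) [DecidableRel G.Adj]
    (w : V → ℕ) (z : Sym2 V → ℕ) : Prop :=
  IsWMatching G w z ∧
    ∀ z' : Sym2 V → ℕ, IsWMatching G w z' →
      ∑ e ∈ G.edgeFinset, z' e ≤ ∑ e ∈ G.edgeFinset, z e

/-!
For any `w`-matching `z` and vertex cover `C`, double counting gives
`∑ₑ z e ≤ ∑ₑ #(C ∩ e) * z e = ∑_{x ∈ C} load x ≤ w(C)`, and the first inequality is strict as soon
as some edge of positive value has both ends in `C`. So it suffices to exhibit, for a maximum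
`w`-matching, a cover of weight at most its value: this is the hard direction of the weighted
König theorem. With sides `s`, `t`, let `R ⊆ s` be the set of vertices reachable from an
unsaturated vertex of `s` by alternating paths (any edge from `s` to `t`, an edge of positive
value back to `s`), and take `C = (s \ R) ∪ N(R)`. Every vertex of `C` is saturated, since an
unsaturated neighbour of `R` would yield an augmenting path, and no edge of positive value joins
`s \ R` to `N(R)`, so complementary slackness gives `w(C) = ∑ₑ z e`.
-/

section WMatching

variable [Fintype V] [DecidableEq V] {G : SimpleGraph V} [DecidableRel G.Adj]

def wLoad (G : SimpleGraph V) [DecidableRel G.Adj] (z : Sym2 V → ℕ) (v : V) : ℕ :=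
  ∑ e ∈ G.edgeFinset with v ∈ e, z e

lemma isWMatching_iff {w : V → ℕ} {z : Sym2 V → ℕ} :
    IsWMatching G w z ↔ ∀ v, wLoad G z v ≤ w v := Iff.rfl

lemma wLoad_add (z₁ z₂ : Sym2 V → ℕ) (v : V) :
    wLoad G (z₁ + z₂) v = wLoad G z₁ v + wLoad G z₂ v :=
  sum_add_distrib

lemma wLoad_single {e : Sym2 V} (he : e ∈ G.edgeFinset) (v : V) :
    wLoad G (Pi.single e 1) v = if v ∈ e then 1 else 0 := by
  simp [wLoad, sum_pi_single', he]

lemma sum_edgeFinset_single {e : Sym2 V} (he : e ∈ G.edgeFinset) :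
    ∑ e' ∈ G.edgeFinset, (Pi.single e 1 : Sym2 V → ℕ) e' = 1 := by
  simp [sum_pi_single', he]

lemma sum_wLoad (z : Sym2 V → ℕ) (C : Finset V) :
    ∑ x ∈ C, wLoad G z x = ∑ e ∈ G.edgeFinset, #{x ∈ C | x ∈ e} * z e := by
  simp_rw [wLoad, sum_filter]
  rw [sum_comm]
  refine sum_congr rfl fun e _ => ?_
  rw [card_filter, sum_mul]
  exact sum_congr rfl fun x _ => by split_ifs <;> simp

lemma exists_eq_add_single {α : Type*} [DecidableEq α] {z : α → ℕ} {a : α} (h : 0 < z a) :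
    ∃ z₀ : α → ℕ, z = z₀ + Pi.single a 1 := by
  obtain ⟨z₀, hz₀⟩ := exists_add_of_le (show Pi.single a (1 : ℕ) ≤ z from fun b => by
    rcases eq_or_ne b a with rfl | hb <;> simp [*]; omega)
  exact ⟨z₀, hz₀.trans (add_comm _ _)⟩

lemma IsVertexCover.one_le_card_filter_mem {C : Finset V} (hC : IsVertexCover G C) {e : Sym2 V}
    (he : e ∈ G.edgeFinset) : 1 ≤ #{x ∈ C | x ∈ e} := by
  induction e using Sym2.ind with
  | _ x y =>
    rw [SimpleGraph.mem_edgeFinset, SimpleGraph.mem_edgeSet] at he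
    rcases hC he with h | h
    · exact card_pos.mpr ⟨x, by simp [h]⟩
    · exact card_pos.mpr ⟨y, by simp [h]⟩

lemma IsWMatching.sum_lt_of_adj_mem {w : V → ℕ} {z : Sym2 V → ℕ} (hz : IsWMatching G w z)
    {C : Finset V} (hC : IsVertexCover G C) {u v : V} (huv : G.Adj u v) (hu : u ∈ C)
    (hv : v ∈ C) (hpos : 0 < z s(u, v)) :
    ∑ e ∈ G.edgeFinset, z e < ∑ x ∈ C, w x := by
  have huv' : s(u, v) ∈ G.edgeFinset := by simpa using huv
  have hcard : ∀ e ∈ G.edgeFinset, (1 + if e = s(u, v) then 1 else 0) ≤ #{x ∈ C | x ∈ e} := by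
    intro e he
    split_ifs with h
    · subst h
      calc 1 + 1 = #{u, v} := (card_pair huv.ne).symm
        _ ≤ _ := card_le_card fun x hx => by aesop
    · exact hC.one_le_card_filter_mem he
  calc ∑ e ∈ G.edgeFinset, z e < ∑ e ∈ G.edgeFinset, z e + z s(u, v) := by omega
    _ = ∑ e ∈ G.edgeFinset, (1 + if e = s(u, v) then 1 else 0) * z e := by
      simp [add_mul, sum_add_distrib, huv']
    _ ≤ ∑ e ∈ G.edgeFinset, #{x ∈ C | x ∈ e} * z e :=
      sum_le_sum fun e he => Nat.mul_le_mul_right _ (hcard e he)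
    _ = ∑ x ∈ C, wLoad G z x := (sum_wLoad z C).symm
    _ ≤ ∑ x ∈ C, w x := sum_le_sum fun x _ => hz x

lemma sum_le_of_wLoad_eq {w : V → ℕ} {z : Sym2 V → ℕ} {C : Finset V}
    (htight : ∀ x ∈ C, wLoad G z x = w x)
    (hone : ∀ p q, G.Adj p q → 0 < z s(p, q) → p ∈ C → q ∉ C) :
    ∑ x ∈ C, w x ≤ ∑ e ∈ G.edgeFinset, z e := by
  have hcard : ∀ e ∈ G.edgeFinset, #{x ∈ C | x ∈ e} * z e ≤ z e := by
    intro e he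
    induction e using Sym2.ind with
    | _ p q =>
      rw [SimpleGraph.mem_edgeFinset, SimpleGraph.mem_edgeSet] at he
      rcases Nat.eq_zero_or_pos (z s(p, q)) with h0 | hpos
      · simp [h0]
      refine mul_le_of_le_one_left' (card_le_one.mpr ?_)
      simp only [mem_filter, Sym2.mem_iff]
      rintro a ⟨ha, rfl | rfl⟩ b ⟨hb, rfl | rfl⟩
      · rfl
      · exact absurd hb (hone _ _ he hpos ha)
      · exact absurd ha (hone _ _ he hpos hb)
      · rfl
  calc ∑ x ∈ C, w x = ∑ x ∈ C, wLoad G z x := sum_congr rfl fun x hx => (htight x hx).symm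
    _ = ∑ e ∈ G.edgeFinset, #{x ∈ C | x ∈ e} * z e := sum_wLoad z C
    _ ≤ _ := sum_le_sum hcard

end WMatching

section Augmenting

variable [Fintype V] [DecidableEq V] {G : SimpleGraph V} [DecidableRel G.Adj] {w : V → ℕ}
  {z : Sym2 V → ℕ}

lemma IsMaxWMatching.le_wLoad_of_adj (hz : IsMaxWMatching G w z) {a b : V} (hab : G.Adj a b)
    (ha : wLoad G z a < w a) : w b ≤ wLoad G z b := by
  by_contra! hb
  have hab' : s(a, b) ∈ G.edgeFinset := by simpa using hab
  have hmatch : IsWMatching G w (z + Pi.single s(a, b) 1) := isWMatching_iff.mpr fun x => by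
    have := isWMatching_iff.mp hz.1 x
    rw [wLoad_add, wLoad_single hab']
    split_ifs with hx
    · rcases Sym2.mem_iff.mp hx with rfl | rfl <;> omega
    · omega
  have := hz.2 _ hmatch
  simp only [Pi.add_apply, sum_add_distrib, sum_edgeFinset_single hab'] at this
  omega

lemma IsMaxWMatching.exists_shift (hz : IsMaxWMatching G w z) {a y b : V} (hay : G.Adj a y)
    (hab : G.Adj a b) (hyb : y ≠ b) (hpos : 0 < z s(a, y)) (hb : wLoad G z b < w b) :
    ∃ z₂, IsMaxWMatching G w z₂ ∧ wLoad G z₂ y < w y ∧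
      (∀ x, x ≠ y → x ≠ b → wLoad G z₂ x = wLoad G z x) ∧ ∀ e ≠ s(a, y), z e ≤ z₂ e := by
  have hay' : s(a, y) ∈ G.edgeFinset := by simpa using hay
  have hab' : s(a, b) ∈ G.edgeFinset := by simpa using hab
  obtain ⟨z₀, hz₀⟩ := exists_eq_add_single hpos
  set z₂ : Sym2 V → ℕ := z₀ + Pi.single s(a, b) 1
  have hload : ∀ x, wLoad G z x = wLoad G z₀ x + (if x ∈ s(a, y) then 1 else 0) ∧
      wLoad G z₂ x = wLoad G z₀ x + (if x ∈ s(a, b) then 1 else 0) := fun x => by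
    simp only [z₂, hz₀, wLoad_add, wLoad_single hay', wLoad_single hab', and_self]
  have hsum : ∑ e ∈ G.edgeFinset, z₂ e = ∑ e ∈ G.edgeFinset, z e := by
    simp only [z₂, hz₀, Pi.add_apply, sum_add_distrib, sum_edgeFinset_single hay',
      sum_edgeFinset_single hab']
  have hmatch := isWMatching_iff.mp hz.1
  refine ⟨z₂, ⟨isWMatching_iff.mpr fun x => ?_, fun z' hz' => hsum ▸ hz.2 z' hz'⟩, ?_, ?_, ?_⟩
  · have hx := hload x
    have := hmatch x
    by_cases hxb : x = b
    · subst hxb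
      simp only [Sym2.mem_iff, hab.ne', hyb.symm, or_self, ↓reduceIte, add_zero, or_true] at hx
      omega
    · rcases eq_or_ne x a with rfl | hxa
      · simp only [Sym2.mem_iff, true_or, ↓reduceIte, hxb, or_false] at hx
        omega
      · simp only [Sym2.mem_iff, hxa, false_or, hxb, or_self, ↓reduceIte, add_zero] at hx
        omega
  · have hy := hload y
    have := hmatch y
    simp only [Sym2.mem_iff, hay.ne', hyb, or_true, or_false, if_true, if_false] at hy
    omega
  · intro x hxy hxb
    have hx := hload x
    simp only [Sym2.mem_iff, hxy, hxb, or_false] at hx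
    omega
  · intro e he
    simp [z₂, hz₀, Pi.single_apply, he]

/-- `AltReach G s w z n x`: the vertex `x ∈ s` is reached from an unsaturated vertex of `s` by an
alternating path that returns to `s` at most `n` times. The bound `n` is there to allow induction
across changes of `z`. -/
inductive AltReach (G : SimpleGraph V) [DecidableRel G.Adj] (s : Set V) (w : V → ℕ)
    (z : Sym2 V → ℕ) : ℕ → V → Prop
  | slack {n : ℕ} {x : V} : x ∈ s → wLoad G z x < w x → AltReach G s w z n x
  | step {n : ℕ} {x' y x : V} : AltReach G s w z n x' → G.Adj x' y → G.Adj x y → x ∈ s →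
      0 < z s(x, y) → AltReach G s w z (n + 1) x

variable {s t : Set V}

lemma AltReach.mem {n : ℕ} {x : V} (h : AltReach G s w z n x) : x ∈ s := by
  cases h <;> assumption

lemma AltReach.transfer {z₂ : Sym2 V → ℕ} {a y : V} (hy : y ∉ s)
    (hload : ∀ x ∈ s, wLoad G z₂ x = wLoad G z x) (hmono : ∀ e ≠ s(a, y), z e ≤ z₂ e)
    {n : ℕ} {x : V} (h : AltReach G s w z n x) :
    AltReach G s w z₂ n x ∨ ∃ m ≤ n, AltReach G s w z m a := by
  induction h with
  | slack hx hlt => exact .inl (.slack hx (hload _ hx ▸ hlt))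
  | @step n x' y' x hx' hx'y' hxy' hx hpos ih =>
    by_cases he : s(x, y') = s(a, y)
    · have hxa : x = a := by
        rcases Sym2.eq_iff.mp he with ⟨h, _⟩ | ⟨h, _⟩
        · exact h
        · exact absurd (h ▸ hx) hy
      exact .inr ⟨n + 1, le_rfl, hxa ▸ .step hx' hx'y' hxy' hx hpos⟩
    · rcases ih with ih | ⟨m, hm, ha⟩
      · exact .inl (.step ih hx'y' hxy' hx (hpos.trans_le (hmono _ he)))
      · exact .inr ⟨m, hm.trans n.le_succ, ha⟩

lemma AltReach.le_wLoad_of_adj (hG : G.IsBipartiteWith s t) (n : ℕ) :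
    ∀ {z : Sym2 V → ℕ} {a b : V}, IsMaxWMatching G w z → AltReach G s w z n a → G.Adj a b →
      w b ≤ wLoad G z b := by
  induction n using Nat.strong_induction_on with
  | _ n ih =>
  intro z a b hz ha hab
  cases ha with
  | slack _ hlt => exact hz.le_wLoad_of_adj hab hlt
  | @step m a' y _ ha' ha'y hay ha hpos =>
    by_cases hyb : y = b
    · exact hyb ▸ ih m m.lt_succ_self hz ha' ha'y
    by_contra! hb
    obtain ⟨z₂, hz₂, hy, hload, hmono⟩ := hz.exists_shift hay hab hyb hpos hb
    have hnot : ∀ {v}, v ∈ t → v ∉ s := fun hv => Set.disjoint_right.mp hG.disjoint hv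
    have hys := hnot (hG.mem_of_mem_adj ha hay)
    have hbs := hnot (hG.mem_of_mem_adj ha hab)
    have hload' : ∀ x ∈ s, wLoad G z₂ x = wLoad G z x :=
      fun x hx => hload x (ne_of_mem_of_not_mem hx hys) (ne_of_mem_of_not_mem hx hbs)
    rcases ha'.transfer hys hload' hmono with ha'₂ | ⟨k, hk, hka⟩
    · exact (ih m m.lt_succ_self hz₂ ha'₂ ha'y).not_gt hy
    · exact (ih k (Nat.lt_succ_of_le hk) hz hka hab).not_gt hb

lemma IsMaxWMatching.exists_isVertexCover_sum_le (hz : IsMaxWMatching G w z)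
    (hG : G.IsBipartiteWith s t) :
    ∃ C : Finset V, IsVertexCover G C ∧ ∑ x ∈ C, w x ≤ ∑ e ∈ G.edgeFinset, z e := by
  classical
  let R : V → Prop := fun x => ∃ n, AltReach G s w z n x
  let C : Finset V := {x | (x ∈ s ∧ ¬R x) ∨ ∃ a, R a ∧ G.Adj a x}
  have hmem : ∀ x, x ∈ C ↔ (x ∈ s ∧ ¬R x) ∨ ∃ a, R a ∧ G.Adj a x := by simp [C]
  have hnot : ∀ {v}, v ∈ t → v ∉ s := fun hv => Set.disjoint_right.mp hG.disjoint hv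
  have hcover : ∀ p q, p ∈ s → G.Adj p q → p ∈ C ∨ q ∈ C := fun p q hp hpq => by
    by_cases hR : R p
    · exact .inr ((hmem q).mpr (.inr ⟨p, hR, hpq⟩))
    · exact .inl ((hmem p).mpr (.inl ⟨hp, hR⟩))
  have hone : ∀ p q, p ∈ s → G.Adj p q → 0 < z s(p, q) → p ∈ C → q ∉ C := by
    intro p q hp hpq hpos hpC hqC
    have hpR : ¬R p := by
      rcases (hmem p).mp hpC with ⟨_, h⟩ | ⟨a, ⟨n, ha⟩, hap⟩
      · exact h
      · exact absurd hp (hnot (hG.mem_of_mem_adj ha.mem hap))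
    rcases (hmem q).mp hqC with ⟨hq, _⟩ | ⟨a, ⟨n, ha⟩, haq⟩
    · exact hnot (hG.mem_of_mem_adj hp hpq) hq
    · exact hpR ⟨n + 1, .step ha haq hpq hp hpos⟩
  refine ⟨C, fun p q hpq => ?_, sum_le_of_wLoad_eq (fun x hx => ?_) fun p q hpq hpos => ?_⟩
  · rcases hG.mem_of_adj hpq with ⟨hp, _⟩ | ⟨_, hq⟩
    · exact hcover p q hp hpq
    · exact (hcover q p hq hpq.symm).symm
  · refine le_antisymm (hz.1 x) ?_
    rcases (hmem x).mp hx with ⟨hxs, hxR⟩ | ⟨a, ⟨n, ha⟩, hax⟩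
    · by_contra! hlt
      exact hxR ⟨0, .slack hxs hlt⟩
    · exact ha.le_wLoad_of_adj hG n hz hax
  · rcases hG.mem_of_adj hpq with ⟨hp, _⟩ | ⟨_, hq⟩
    · exact hone p q hp hpq hpos
    · exact fun hpC hqC => hone q p hq hpq.symm (Sym2.eq_swap ▸ hpos) hqC hpC

end Augmenting

theorem stmt_3_general [Fintype V] [DecidableEq V] (G : SimpleGraph V) [DecidableRel G.Adj]
    (hbip : G.Colorable 2) (w : V → ℕ)
    (z : Sym2 V → ℕ) (hz : IsMaxWMatching G w z)
    (u v : V) (huv : G.Adj u v) (hpos : 0 < z s(u, v))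
    (C : Finset V) (hC : IsMinVertexCover G w C) :
    (u ∈ C ∧ v ∉ C) ∨ (u ∉ C ∧ v ∈ C) := by
  obtain ⟨s, t, hst⟩ := SimpleGraph.IsBipartite.exists_isBipartiteWith hbip
  obtain ⟨C', hC', hC'le⟩ := hz.exists_isVertexCover_sum_le hst
  have hnot_both : ¬(u ∈ C ∧ v ∈ C) := fun ⟨hu, hv⟩ =>
    ((hC.2 C' hC').trans hC'le).not_gt (hz.1.sum_lt_of_adj_mem hC.1 huv hu hv hpos)
  have := hC.1 huv
  tauto

/-- If a maximum `w`-matching of a bipartite graph puts positive value on the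
edge `{u,v}`, then every minimum-weight vertex cover contains exactly one of `u`, `v`. -/
theorem stmt_3 [Fintype V] [DecidableEq V] (G : SimpleGraph V) [DecidableRel G.Adj]
    (hbip : G.Colorable 2) (w : V → ℕ) (hw : ∀ v, 0 < w v)
    (z : Sym2 V → ℕ) (hz : IsMaxWMatching G w z)
    (u v : V) (huv : G.Adj u v) (hpos : 0 < z s(u, v))
    (C : Finset V) (hC : IsMinVertexCover G w C) :
    (u ∈ C ∧ v ∉ C) ∨ (u ∉ C ∧ v ∈ C) :=
  stmt_3_general G hbip w z hz u v huv hpos C hC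
end

section
/- Let n ≥ 1, let G_n be the bipartite perfect-matching graph on v₁,…,v_{n+1}, v′₁,…,v′_{n+1} with edges {vᵢ, v′ᵢ}. Given an integer weight vector w ∈ ℤ^n and threshold t ∈ ℤ, let c = |min(min_i w[i], t)| + 1 and define h_{w,t}(vᵢ) = w[i] + c for i ≤ n, h_{w,t}(v_{n+1}) = t + c, and h_{w,t}(v′ᵢ) = c for all i. If (w_f, t_f) and (w_g, t_g) induce distinct n-bit threshold functions, then h_{w_f,t_f} and h_{w_g,t_g} are not vertex-cover equivalent on G_n: there are inclusion-minimal vertex covers S₁, S₂ of G_n with h_{w_f,t_f}(S₁) ≤ h_{w_f,t_f}(S₂) but h_{w_g,t_g}(S₁) > h_{w_g,t_g}(S₂), or vice versa. -/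
open Finset

variable {V : Type*}

/-- An inclusion-minimal vertex cover. -/
def MinimalVC (G : SimpleGraph V) (C : Finset V) : Prop :=
  IsVertexCover G C ∧ ∀ C' : Finset V, C' ⊂ C → ¬ IsVertexCover G C'

/-- The perfect-matching graph on `vᵢ = (i, false)`, `v′ᵢ = (i, true)`. -/
def Gm (n : ℕ) : SimpleGraph (Fin (n + 1) × Bool) where
  Adj u v := u.1 = v.1 ∧ u.2 ≠ v.2
  symm := ⟨fun u v ⟨h1, h2⟩ => ⟨h1.symm, h2.symm⟩⟩
  loopless := ⟨fun u ⟨_, h⟩ => h rfl⟩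

/-- The weight function `h_{w,t}`: with `c = |min(minᵢ w[i], t)| + 1`, vertex `vᵢ` gets
`w[i] + c` (for `i ≤ n`), `v_{n+1}` gets `t + c`, and every `v′ᵢ` gets `c`. -/
def hwt (n : ℕ) (w : Fin n → ℤ) (t : ℤ) : Fin (n + 1) × Bool → ℤ :=
  fun p =>
    let c : ℤ := ((Finset.univ.fold min t w).natAbs : ℤ) + 1
    if p.2 = true then c
    else if h : (p.1 : ℕ) < n then w ⟨p.1, h⟩ + c
    else t + c

/-!
Choosing one endpoint of every matching edge gives a minimal vertex cover with exactly `n + 1`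
vertices, so the shift `c` contributes `(n + 1) c` to every such cover and cancels in comparisons.
Comparing the cover `{v′₁, …, v′ₙ, v_{n+1}}` with the cover that takes `vᵢ` exactly when
`X[i] = 1` (and `v′_{n+1}`) therefore compares `t` with `∑ w[i] X[i]`, and an input `X` on which
the two threshold functions differ orders these covers differently under the two weightings.
-/

def matchingCover (n : ℕ) (b : Fin (n + 1) → Bool) : Finset (Fin (n + 1) × Bool) :=
  univ.image fun i => (i, b i)

lemma mem_matchingCover {n : ℕ} {b : Fin (n + 1) → Bool} {p : Fin (n + 1) × Bool} :
    p ∈ matchingCover n b ↔ b p.1 = p.2 := by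
  obtain ⟨i, x⟩ := p
  simp [matchingCover, eq_comm]

lemma isVertexCover_matchingCover (n : ℕ) (b : Fin (n + 1) → Bool) :
    IsVertexCover (Gm n) (matchingCover n b) := by
  rintro ⟨i, x⟩ ⟨j, y⟩ ⟨rfl, hxy⟩
  simp only [mem_matchingCover]
  cases x <;> cases y <;> cases b i <;> simp_all

lemma minimalVC_matchingCover (n : ℕ) (b : Fin (n + 1) → Bool) :
    MinimalVC (Gm n) (matchingCover n b) := by
  refine ⟨isVertexCover_matchingCover n b, fun C hC hcov => ?_⟩
  obtain ⟨⟨i, x⟩, hxS, hxC⟩ := exists_of_ssubset hC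
  obtain rfl : b i = x := mem_matchingCover.mp hxS
  have hedge : (Gm n).Adj (i, b i) (i, !b i) := ⟨rfl, by simp⟩
  have hopp : (i, !b i) ∈ matchingCover n b := hC.subset ((hcov hedge).resolve_left hxC)
  simp [mem_matchingCover] at hopp

lemma sum_matchingCover_snoc {M : Type*} [AddCommMonoid M] (n : ℕ) (f : Fin (n + 1) × Bool → M)
    (b : Fin n → Bool) (β : Bool) :
    ∑ p ∈ matchingCover n (Fin.snoc b β), f p =
      ∑ i : Fin n, f (i.castSucc, b i) + f (Fin.last n, β) := by
  rw [matchingCover, sum_image fun i _ j _ h => congrArg Prod.fst h, Fin.sum_univ_castSucc]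
  simp

section hwt

variable {n : ℕ} (w : Fin n → ℤ) (t : ℤ)

def hwtShift : ℤ := ((univ.fold min t w).natAbs : ℤ) + 1

lemma hwt_true (i : Fin (n + 1)) : hwt n w t (i, true) = hwtShift w t := rfl

lemma hwt_castSucc_not (i : Fin n) (x : Bool) :
    hwt n w t (i.castSucc, !x) = w i * (if x then 1 else 0) + hwtShift w t := by
  cases x <;> simp [hwt, hwtShift]

lemma hwt_last_false : hwt n w t (Fin.last n, false) = t + hwtShift w t := by
  simp [hwt, hwtShift]

lemma sum_hwt_le_sum_hwt_iff (X : Fin n → Bool) :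
    (∑ p ∈ matchingCover n (Fin.snoc (fun _ => true) false), hwt n w t p ≤
        ∑ p ∈ matchingCover n (Fin.snoc (fun i => !X i) true), hwt n w t p) ↔
      t ≤ ∑ i, w i * (if X i then 1 else 0) := by
  simp only [sum_matchingCover_snoc, hwt_castSucc_not, hwt_true, hwt_last_false,
    sum_add_distrib, sum_const, card_univ, Fintype.card_fin]
  constructor <;> intro h <;> linarith

end hwt

theorem stmt_10_general (n : ℕ) (wf wg : Fin n → ℤ) (tf tg : ℤ)
    (hdist : ∃ X : Fin n → Bool,
        ¬ ((tf ≤ ∑ i, wf i * (if X i then 1 else 0)) ↔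
           (tg ≤ ∑ i, wg i * (if X i then 1 else 0)))) :
    ∃ S₁ S₂ : Finset (Fin (n + 1) × Bool),
      MinimalVC (Gm n) S₁ ∧ MinimalVC (Gm n) S₂ ∧
      ¬ ((∑ v ∈ S₁, hwt n wf tf v ≤ ∑ v ∈ S₂, hwt n wf tf v) ↔
         (∑ v ∈ S₁, hwt n wg tg v ≤ ∑ v ∈ S₂, hwt n wg tg v)) := by
  obtain ⟨X, hX⟩ := hdist
  refine ⟨_, _, minimalVC_matchingCover n (Fin.snoc (fun _ => true) false),
    minimalVC_matchingCover n (Fin.snoc (fun i => !X i) true), ?_⟩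
  rwa [sum_hwt_le_sum_hwt_iff, sum_hwt_le_sum_hwt_iff]

/-- If `(w_f, t_f)` and `(w_g, t_g)` induce distinct `n`-bit threshold
functions, then `h_{w_f,t_f}` and `h_{w_g,t_g}` are not vertex-cover equivalent on `G_n`:
some pair of inclusion-minimal vertex covers is ordered differently by the two weights. -/
theorem stmt_10 (n : ℕ) (hn : 1 ≤ n) (wf wg : Fin n → ℤ) (tf tg : ℤ)
    (hdist : ∃ X : Fin n → Bool,
        ¬ ((tf ≤ ∑ i, wf i * (if X i then 1 else 0)) ↔
           (tg ≤ ∑ i, wg i * (if X i then 1 else 0)))) :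
    ∃ S₁ S₂ : Finset (Fin (n + 1) × Bool),
      MinimalVC (Gm n) S₁ ∧ MinimalVC (Gm n) S₂ ∧
      ¬ ((∑ v ∈ S₁, hwt n wf tf v ≤ ∑ v ∈ S₂, hwt n wf tf v) ↔
         (∑ v ∈ S₁, hwt n wg tg v ≤ ∑ v ∈ S₂, hwt n wg tg v)) :=
  stmt_10_general n wf wg tf tg hdist
end

section
/- Let G be a d-uniform hypergraph with nonnegative integer hyperedge weights w and target t, and let W = Σ_{e∈E(G)} w(e) with 0 ≤ t ≤ W. Construct a weighted formula Φ over Boolean variables V(G) containing, for each d-element subset e = {v₁,…,v_d} of V(G), the constraint AND_d(v₁,…,v_d) with weight w(e) if e ∈ E(G) and weight W+1 if e ∉ E(G). Then there is a hyperclique X ⊆ V(G) with total hyperedge weight exactly t if and only if there is an assignment x : V(G) → {0,1} such that the total weight of satisfied constraints Φ(x) equals t. -/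
open Finset

/-! Under the assignment `x`, the satisfied constraints are exactly the `d`-subsets of
`X = {v | x v}`. A single satisfied forbidden constraint already costs `W + 1 > t`, so
`Φ(x) = t` forces every `d`-subset of `X` to be a hyperedge; and once `X` is a hyperclique,
its `d`-subsets are precisely the hyperedges inside `X`, all carrying their own weight. -/

section

variable {V : Type*} [DecidableEq V]

theorem Finset.filter_subset_powersetCard_univ [Fintype V] (d : ℕ) (X : Finset V) :
    (univ.powersetCard d).filter (· ⊆ X) = X.powersetCard d := by
  ext e
  simp [mem_powersetCard, and_comm]

theorem Finset.powersetCard_eq_filter_subset_of_uniform {d : ℕ} {E : Finset (Finset V)}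
    (hE : ∀ e ∈ E, e.card = d) {X : Finset V} (hX : X.powersetCard d ⊆ E) :
    X.powersetCard d = E.filter (· ⊆ X) := by
  ext e
  simp only [mem_powersetCard, mem_filter]
  exact ⟨fun he => ⟨hX (mem_powersetCard.2 he), he.1⟩, fun he => ⟨he.2, hE e he.1⟩⟩

end

theorem Finset.subset_of_sum_ite_mem_le {α : Type*} {s E : Finset α} [DecidablePred (· ∈ E)]
    {f : α → ℕ} {M t : ℕ} (hM : t < M) (h : ∑ e ∈ s, (if e ∈ E then f e else M) ≤ t) :
    s ⊆ E := by
  intro e he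
  by_contra hne
  have : M ≤ ∑ e ∈ s, (if e ∈ E then f e else M) := by
    simpa [hne] using single_le_sum (f := fun e => if e ∈ E then f e else M)
      (fun _ _ => Nat.zero_le _) he
  omega

theorem stmt_12_general {V : Type*} [Fintype V] [DecidableEq V]
    (d : ℕ)
    (E : Finset (Finset V)) (hE : ∀ e ∈ E, e.card = d)
    (w : Finset V → ℕ) (t : ℕ) (ht : t ≤ ∑ e ∈ E, w e) :
    (∃ X : Finset V, (∀ e ∈ X.powersetCard d, e ∈ E) ∧
        ∑ e ∈ E.filter (· ⊆ X), w e = t) ↔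
    (∃ x : V → Bool,
        ∑ e ∈ (Finset.univ.powersetCard d).filter
            (· ⊆ Finset.univ.filter (fun v => x v = true)),
          (if e ∈ E then w e else (∑ e' ∈ E, w e') + 1) = t) := by
  constructor
  · rintro ⟨X, hX, rfl⟩
    refine ⟨(· ∈ X), ?_⟩
    have hXE : X.powersetCard d ⊆ E := fun e he => hX e he
    rw [show univ.filter (fun v => decide (v ∈ X) = true) = X by ext; simp,
      filter_subset_powersetCard_univ, sum_ite_of_true hXE,
      powersetCard_eq_filter_subset_of_uniform hE hXE]
  · rintro ⟨x, hx⟩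
    set X := univ.filter (fun v => x v = true)
    rw [filter_subset_powersetCard_univ] at hx
    have hXE : X.powersetCard d ⊆ E := subset_of_sum_ite_mem_le (Nat.lt_succ_of_le ht) hx.le
    refine ⟨X, fun e he => hXE he, ?_⟩
    rw [← powersetCard_eq_filter_subset_of_uniform hE hXE, ← hx, sum_ite_of_true hXE]

/-- Equivalence between Exact-Edge-Weight `d`-Uniform Hyperclique and the
weighted CSP over `AND_d` constraints: hyperedges keep their weight, non-hyperedge
`d`-subsets get the forbidden weight `W + 1`. There is a hyperclique of total weight `t`
iff some Boolean assignment satisfies constraints of total weight exactly `t`. -/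
theorem stmt_12 {V : Type*} [Fintype V] [DecidableEq V]
    (d : ℕ) (hd : 1 ≤ d)
    (E : Finset (Finset V)) (hE : ∀ e ∈ E, e.card = d)
    (w : Finset V → ℕ) (t : ℕ) (ht : t ≤ ∑ e ∈ E, w e) :
    (∃ X : Finset V, (∀ e ∈ X.powersetCard d, e ∈ E) ∧
        ∑ e ∈ E.filter (· ⊆ X), w e = t) ↔
    (∃ x : V → Bool,
        ∑ e ∈ (Finset.univ.powersetCard d).filter
            (· ⊆ Finset.univ.filter (fun v => x v = true)),
          (if e ∈ E then w e else (∑ e' ∈ E, w e') + 1) = t) :=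
  stmt_12_general d E hE w t ht
end
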